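/- arXiv:2102.10916 — 6 statements merged into one kernel-verified Lean document; each statement's English description precedes it below -/
import Mathlib

section
/- Let G be a connected bipartite graph. Then every metric generator for G is also an edge metric generator for G. -/
/-- Distance from a vertex `s` to an edge `e` (as an element of `Sym2 V`):
the minimum of the distances from `s` to the two endpoints of `e`. -/
noncomputable def edgeDist {V : Type*} (G : SimpleGraph V) (e : Sym2 V) (s : V) : ℕ :=
  Sym2.lift ⟨fun x y => min (G.dist x s) (G.dist y s), fun _ _ => min_comm _ _⟩ e

/-- `S` is a metric generator for `G`: every pair of distinct vertices is
distinguished by some element of `S`. -/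
def IsMetricGen {V : Type*} (G : SimpleGraph V) (S : Set V) : Prop :=
  ∀ u v : V, u ≠ v → ∃ s ∈ S, G.dist s u ≠ G.dist s v

/-- `S` is an edge metric generator for `G`: every pair of distinct edges is
distinguished by some element of `S`. -/
def IsEdgeMetricGen {V : Type*} (G : SimpleGraph V) (S : Set V) : Prop :=
  ∀ e₁ ∈ G.edgeSet, ∀ e₂ ∈ G.edgeSet, e₁ ≠ e₂ → ∃ s ∈ S, edgeDist G e₁ s ≠ edgeDist G e₂ s

/-- Distance from a vertex `s` to a mixed element (a vertex or an edge). -/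
noncomputable def mixedDist {V : Type*} (G : SimpleGraph V) (a : V ⊕ Sym2 V) (s : V) : ℕ :=
  Sum.elim (fun w => G.dist s w) (fun e => edgeDist G e s) a

/-- A mixed element is valid if it is a vertex, or an actual edge of `G`. -/
def IsMixedElem {V : Type*} (G : SimpleGraph V) (a : V ⊕ Sym2 V) : Prop :=
  Sum.elim (fun _ => True) (fun e => e ∈ G.edgeSet) a

/-- `S` is a mixed metric generator for `G`: every pair of distinct elements of
`V(G) ∪ E(G)` is distinguished by some element of `S`. -/
def IsMixedMetricGen {V : Type*} (G : SimpleGraph V) (S : Set V) : Prop :=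
  ∀ a b : V ⊕ Sym2 V, IsMixedElem G a → IsMixedElem G b → a ≠ b →
    ∃ s ∈ S, mixedDist G a s ≠ mixedDist G b s

/-- The metric dimension: minimum cardinality of a metric generator. -/
noncomputable def metricDim {V : Type*} [Fintype V] (G : SimpleGraph V) : ℕ :=
  sInf {n | ∃ S : Finset V, S.card = n ∧ IsMetricGen G ↑S}

/-- The edge metric dimension: minimum cardinality of an edge metric generator. -/
noncomputable def edgeMetricDim {V : Type*} [Fintype V] (G : SimpleGraph V) : ℕ :=
  sInf {n | ∃ S : Finset V, S.card = n ∧ IsEdgeMetricGen G ↑S}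

/-- The mixed metric dimension: minimum cardinality of a mixed metric generator. -/
noncomputable def mixedMetricDim {V : Type*} [Fintype V] (G : SimpleGraph V) : ℕ :=
  sInf {n | ∃ S : Finset V, S.card = n ∧ IsMixedMetricGen G ↑S}

/-- The hypercube `Q_d`: vertices are binary vectors of length `d`, with two
vertices adjacent iff they differ in exactly one coordinate. -/
def cube (d : ℕ) : SimpleGraph (Fin d → Bool) where
  Adj u v := hammingDist u v = 1
  symm := ⟨fun u v h => by simp only [hammingDist_comm] at h ⊢; exact h⟩
  loopless := ⟨fun u h => by simp only [hammingDist_self] at h; exact one_ne_zero h.symm⟩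

/-!
In a connected bipartite graph the distances from a vertex `s` to the two ends of an edge are
`m` and `m + 1`, where `m` is the distance from `s` to the edge, and their parities are fixed by
the colour classes of `s` and of the ends. Orient two edges `xy`, `uv` so that `x, u` and `y, v`
share their colours; if no vertex of `S` separates the edges, parity forces
`d(s, x) = d(s, u)` and `d(s, y) = d(s, v)` for all `s ∈ S`, so `x = u` and `y = v`.
-/

namespace SimpleGraph

variable {V : Type*} {G : SimpleGraph V}

theorem Coloring.even_dist_iff_congr (c : G.Coloring Bool) {u v : V} (h : G.Reachable u v) :
    Even (G.dist u v) ↔ (c u ↔ c v) := by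
  obtain ⟨p, hp⟩ := h.exists_walk_length_eq_dist
  rw [← hp, c.even_length_iff_congr p]

theorem Coloring.dist_eq_dist_add_one_of_adj_of_reachable (c : G.Coloring Bool) {u v w : V}
    (hadj : G.Adj v w) (hreach : G.Reachable u v) :
    G.dist u v = G.dist u w + 1 ∨ G.dist u w = G.dist u v + 1 := by
  have hv := c.even_dist_iff_congr hreach
  have hw := c.even_dist_iff_congr (hreach.trans hadj.reachable)
  have hvw : c v ≠ c w := c.valid hadj
  have hne : G.dist u v ≠ G.dist u w := by
    intro heq
    rw [heq, hw] at hv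
    exact hvw (by revert hv; cases c u <;> cases c v <;> simp)
  have := hadj.diff_dist_adj (u := u)
  omega

theorem Coloring.dist_eq_of_edgeDist_eq (c : G.Coloring Bool) {s x y u v : V}
    (hxy : G.Adj x y) (huv : G.Adj u v) (hsx : G.Reachable s x) (hsu : G.Reachable s u)
    (hxu : c x = c u) (h : edgeDist G s(x, y) s = edgeDist G s(u, v) s) :
    G.dist s x = G.dist s u := by
  simp only [edgeDist, Sym2.lift_mk, G.dist_comm (v := s)] at h
  have hx := c.dist_eq_dist_add_one_of_adj_of_reachable hxy hsx
  have hu := c.dist_eq_dist_add_one_of_adj_of_reachable huv hsu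
  have hpar : Even (G.dist s x) ↔ Even (G.dist s u) := by
    rw [c.even_dist_iff_congr hsx, c.even_dist_iff_congr hsu, hxu]
  simp only [Nat.even_iff] at hpar
  omega

theorem Coloring.exists_sym2_eq_and_colors_eq (c : G.Coloring Bool) {x y u v : V}
    (hxy : G.Adj x y) (huv : G.Adj u v) :
    ∃ u' v', s(u', v') = s(u, v) ∧ G.Adj u' v' ∧ c x = c u' ∧ c y = c v' := by
  have hcxy := c.valid hxy
  have hcuv := c.valid huv
  by_cases hxu : c x = c u
  · refine ⟨u, v, rfl, huv, hxu, ?_⟩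
    rw [Bool.eq_not_of_ne hcxy.symm, Bool.eq_not_of_ne hcuv.symm, hxu]
  · refine ⟨v, u, Sym2.eq_swap, huv.symm, ?_, ?_⟩
    · rw [Bool.eq_not_of_ne hxu, Bool.eq_not_of_ne hcuv.symm]
    · rw [Bool.eq_not_of_ne hcxy.symm, Bool.eq_not_of_ne hxu, Bool.not_not]

end SimpleGraph

theorem IsMetricGen.eq_of_forall_dist_eq {V : Type*} {G : SimpleGraph V} {S : Set V}
    (hS : IsMetricGen G S) {u v : V} (h : ∀ s ∈ S, G.dist s u = G.dist s v) : u = v := by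
  by_contra hne
  obtain ⟨s, hs, hd⟩ := hS u v hne
  exact hd (h s hs)

/-- In a connected bipartite graph, every metric generator is
also an edge metric generator. -/
theorem stmt0 {V : Type*} (G : SimpleGraph V) (hconn : G.Connected)
    (hbip : G.Colorable 2) (S : Set V) (hS : IsMetricGen G S) :
    IsEdgeMetricGen G S := by
  obtain c : G.Coloring Bool := G.recolorOfEquiv finTwoEquiv hbip.some
  intro e₁ he₁ e₂ he₂
  contrapose!
  intro hdist
  induction e₁ using Sym2.ind with | h x y =>
  induction e₂ using Sym2.ind with | h u v =>
  rw [SimpleGraph.mem_edgeSet] at he₁ he₂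
  obtain ⟨u', v', he, huv', hxu, hyv⟩ := c.exists_sym2_eq_and_colors_eq he₁ he₂
  rw [← he] at hdist ⊢
  have hx : x = u' := hS.eq_of_forall_dist_eq fun s hs =>
    c.dist_eq_of_edgeDist_eq he₁ huv' (hconn s x) (hconn s u') hxu (hdist s hs)
  have hy : y = v' := hS.eq_of_forall_dist_eq fun s hs =>
    c.dist_eq_of_edgeDist_eq he₁.symm huv'.symm (hconn s y) (hconn s v') hyv
      (by rw [Sym2.eq_swap, hdist s hs, Sym2.eq_swap])
  rw [hx, hy]
end

section
/- For every connected bipartite graph G, the edge metric dimension of G is at most the metric dimension of G, i.e., edim(G) ≤ dim(G). -/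
/-!
Fix a proper 2-colouring. Given distinct edges `e₁`, `e₂`, one can pick distinct endpoints
`x ∈ e₁`, `y ∈ e₂` of the same colour. A vertex `s` of a metric generator separating `x` and `y`
sees them at distances of equal parity, hence at distances differing by at least 2; since the
distance from `s` to an edge is within 1 of the distance to each of its endpoints, `s` also
separates `e₁` and `e₂`.
-/

namespace SimpleGraph

variable {V : Type*} {G : SimpleGraph V}

lemma edgeDist_mk (a b s : V) : edgeDist G s(a, b) s = min (G.dist a s) (G.dist b s) := rfl

lemma edgeDist_le_dist {e : Sym2 V} {x : V} (hx : x ∈ e) (s : V) :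
    edgeDist G e s ≤ G.dist x s := by
  induction e using Sym2.ind with | _ a b => ?_
  rcases Sym2.mem_iff.1 hx with rfl | rfl <;> simp [edgeDist_mk]

lemma dist_le_edgeDist_add_one (hconn : G.Connected) {e : Sym2 V} (he : e ∈ G.edgeSet)
    {x : V} (hx : x ∈ e) (s : V) : G.dist x s ≤ edgeDist G e s + 1 := by
  induction e using Sym2.ind with | _ a b => ?_
  have hab : G.dist a b = 1 := dist_eq_one_iff_adj.2 he
  have hab' : G.dist b a = 1 := dist_eq_one_iff_adj.2 (show G.Adj a b from he).symm
  have := hconn.dist_triangle (u := a) (v := b) (w := s)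
  have := hconn.dist_triangle (u := b) (v := a) (w := s)
  rw [edgeDist_mk]
  rcases Sym2.mem_iff.1 hx with rfl | rfl <;> omega

namespace Coloring

lemma even_dist_iff (hconn : G.Connected) (c : G.Coloring Bool) (u v : V) :
    Even (G.dist u v) ↔ c u = c v := by
  obtain ⟨p, hp⟩ := hconn.exists_walk_length_eq_dist u v
  rw [← hp, c.even_length_iff_congr p, ← Bool.eq_iff_iff]

lemma dist_mod_two_eq (hconn : G.Connected) (c : G.Coloring Bool) {x y : V} (hxy : c x = c y)
    (s : V) : G.dist x s % 2 = G.dist y s % 2 := by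
  have hx := c.even_dist_iff hconn x s
  have hy := c.even_dist_iff hconn y s
  rw [hxy, ← hy, Nat.even_iff, Nat.even_iff] at hx
  omega

lemma exists_mem_edge_eq (c : G.Coloring Bool) {e : Sym2 V} (he : e ∈ G.edgeSet) (b : Bool) :
    ∃ x ∈ e, c x = b := by
  induction e using Sym2.ind with | _ u v => ?_
  have huv : c u ≠ c v := c.valid he
  by_cases hu : c u = b
  · exact ⟨u, Sym2.mem_mk_left u v, hu⟩
  · exact ⟨v, Sym2.mem_mk_right u v, by cases b <;> cases hcu : c u <;> simp_all⟩

lemma exists_mem_mem_ne_eq_of_ne (c : G.Coloring Bool) {e₁ e₂ : Sym2 V}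
    (he₁ : e₁ ∈ G.edgeSet) (he₂ : e₂ ∈ G.edgeSet) (hne : e₁ ≠ e₂) :
    ∃ x ∈ e₁, ∃ y ∈ e₂, x ≠ y ∧ c x = c y := by
  -- Otherwise the endpoints of each colour coincide, and so do the edges.
  by_contra! h
  obtain ⟨x₀, hx₀, hcx₀⟩ := c.exists_mem_edge_eq he₁ false
  obtain ⟨x₁, hx₁, hcx₁⟩ := c.exists_mem_edge_eq he₁ true
  obtain ⟨y₀, hy₀, hcy₀⟩ := c.exists_mem_edge_eq he₂ false
  obtain ⟨y₁, hy₁, hcy₁⟩ := c.exists_mem_edge_eq he₂ true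
  have h₀ : x₀ = y₀ := by_contra fun hxy => h x₀ hx₀ y₀ hy₀ hxy (hcx₀.trans hcy₀.symm)
  have h₁ : x₁ = y₁ := by_contra fun hxy => h x₁ hx₁ y₁ hy₁ hxy (hcx₁.trans hcy₁.symm)
  have hx : x₀ ≠ x₁ := fun hx => by simp_all
  subst h₀ h₁
  exact hne (((Sym2.mem_and_mem_iff hx).1 ⟨hx₀, hx₁⟩).trans
    ((Sym2.mem_and_mem_iff hx).1 ⟨hy₀, hy₁⟩).symm)

end Coloring

theorem isEdgeMetricGen_of_isMetricGen (hconn : G.Connected) (c : G.Coloring Bool) {S : Set V}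
    (hS : IsMetricGen G S) : IsEdgeMetricGen G S := by
  intro e₁ he₁ e₂ he₂ hne
  obtain ⟨x, hx, y, hy, hxy, hcxy⟩ := c.exists_mem_mem_ne_eq_of_ne he₁ he₂ hne
  obtain ⟨s, hs, hsxy⟩ := hS x y hxy
  refine ⟨s, hs, fun heq => hsxy ?_⟩
  have hpar := c.dist_mod_two_eq hconn hcxy s
  have := edgeDist_le_dist (G := G) hx s
  have := edgeDist_le_dist (G := G) hy s
  have := dist_le_edgeDist_add_one hconn he₁ hx s
  have := dist_le_edgeDist_add_one hconn he₂ hy s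
  rw [dist_comm, dist_comm (u := s)]
  omega

lemma isMetricGen_univ (hconn : G.Connected) : IsMetricGen G Set.univ :=
  fun u v huv => ⟨u, Set.mem_univ u, by rw [dist_self]; exact (hconn.pos_dist_of_ne huv).ne⟩

lemma exists_isMetricGen_card_eq_metricDim [Fintype V] (hconn : G.Connected) :
    ∃ S : Finset V, S.card = metricDim G ∧ IsMetricGen G ↑S :=
  Nat.sInf_mem (s := {n | ∃ S : Finset V, S.card = n ∧ IsMetricGen G ↑S})
    ⟨Finset.univ.card, Finset.univ, rfl, by simpa using isMetricGen_univ hconn⟩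

end SimpleGraph

open SimpleGraph in
/-- For every connected bipartite graph, `edim(G) ≤ dim(G)`. -/
theorem stmt1 {V : Type*} [Fintype V] (G : SimpleGraph V) (hconn : G.Connected)
    (hbip : G.Colorable 2) :
    edgeMetricDim G ≤ metricDim G := by
  obtain ⟨c⟩ := hbip
  obtain ⟨S, hcard, hS⟩ := exists_isMetricGen_card_eq_metricDim hconn
  exact Nat.sInf_le ⟨S, hcard,
    isEdgeMetricGen_of_isMetricGen hconn (G.recolorOfEquiv finTwoEquiv c) hS⟩
end

section
/- Let S be an edge metric generator of the hypercube Q_d and let s be an arbitrary element of S. Then S ∪ {s ⊕ α_1} is a metric generator of Q_d, where s ⊕ α_1 denotes the vertex obtained from s by flipping its first coordinate. -/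
/-!
Flipping coordinate `i` of a vertex `w` changes its distance to any `x` by `±1`, according as
`w i = x i` or not. Hence, if `u ≠ v` are resolved neither by `s` nor by `s` with its first
coordinate flipped, then `u` and `v` agree in the first coordinate, so the edges `u u'` and `v v'`
obtained by flipping it are distinct. The distance from `x` to the edge `w w'` is
`d(w, x) - [w₁ ≠ x₁]`, so every `x ∈ S` that does not resolve `u, v` does not resolve these two
edges either, contradicting that `S` is an edge metric generator.
-/

open Function Finset

section Hamming

variable {ι : Type*} [Fintype ι] [DecidableEq ι]

theorem hammingDist_update_add {β : ι → Type*} [∀ i, DecidableEq (β i)] (w x : ∀ i, β i) (i : ι)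
    (a : β i) :
    hammingDist (update w i a) x + (if w i ≠ x i then 1 else 0)
      = hammingDist w x + (if a ≠ x i then 1 else 0) := by
  simp only [hammingDist, card_filter]
  rw [← add_sum_erase _ _ (mem_univ i), ← add_sum_erase _ _ (mem_univ i),
    sum_congr rfl fun j hj => by rw [update_of_ne (ne_of_mem_erase hj)], update_self]
  ring

theorem hammingDist_update_not_add (w x : ι → Bool) (i : ι) :
    hammingDist (update w i (!w i)) x + (if w i ≠ x i then 1 else 0)
      = hammingDist w x + (if w i = x i then 1 else 0) := by
  rw [hammingDist_update_add]
  cases w i <;> cases x i <;> rfl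

theorem apply_eq_of_hammingDist_eq_of_update_not {s u v : ι → Bool} {i : ι}
    (h : hammingDist s u = hammingDist s v)
    (hflip : hammingDist (update s i (!s i)) u = hammingDist (update s i (!s i)) v) :
    u i = v i := by
  have hu := hammingDist_update_not_add s u i
  have hv := hammingDist_update_not_add s v i
  rw [h, hflip] at hu
  revert hu hv
  cases s i <;> cases u i <;> cases v i <;> simp <;> omega

end Hamming

namespace cube

variable {d : ℕ}

theorem adj_update {u : Fin d → Bool} {i : Fin d} {a : Bool} (h : u i ≠ a) :
    (cube d).Adj u (update u i a) := by
  have := hammingDist_update_add u u i a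
  rw [hammingDist_self, if_neg (not_not.2 rfl), if_pos (Ne.symm h)] at this
  change hammingDist u (update u i a) = 1
  rw [hammingDist_comm]
  omega

theorem exists_walk_length_eq_hammingDist (u v : Fin d → Bool) :
    ∃ p : (cube d).Walk u v, p.length = hammingDist u v := by
  induction h : hammingDist u v generalizing u with
  | zero =>
    obtain rfl := hammingDist_eq_zero.1 h
    exact ⟨.nil, rfl⟩
  | succ n ih =>
    obtain ⟨i, hi⟩ : ∃ i, u i ≠ v i := by
      by_contra! hc
      simp [funext hc] at h
    have hcloser := hammingDist_update_add u v i (v i)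
    rw [if_pos hi, if_neg (not_not.2 rfl)] at hcloser
    obtain ⟨p, hp⟩ := ih (update u i (v i)) (by omega)
    exact ⟨.cons (adj_update hi) p, by simp [hp]⟩

theorem hammingDist_le_length {u v : Fin d → Bool} (p : (cube d).Walk u v) :
    hammingDist u v ≤ p.length := by
  induction p with
  | nil => simp
  | @cons a b c hab p ih =>
    have : hammingDist a b = 1 := hab
    have := hammingDist_triangle a b c
    rw [SimpleGraph.Walk.length_cons]
    omega

theorem dist_eq_hammingDist (u v : Fin d → Bool) : (cube d).dist u v = hammingDist u v := by
  obtain ⟨p, hp⟩ := exists_walk_length_eq_hammingDist u v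
  obtain ⟨q, hq⟩ := SimpleGraph.Reachable.exists_walk_length_eq_dist ⟨p⟩
  exact le_antisymm (hp ▸ SimpleGraph.dist_le p) (hq ▸ hammingDist_le_length q)

theorem edgeDist_update_not_add (w x : Fin d → Bool) (i : Fin d) :
    edgeDist (cube d) s(w, update w i (!w i)) x + (if w i ≠ x i then 1 else 0)
      = hammingDist w x := by
  have := hammingDist_update_not_add w x i
  simp only [edgeDist, Sym2.lift_mk, dist_eq_hammingDist]
  split_ifs at this ⊢ <;> omega

end cube

/-- If `S` is an edge metric generator of `Q_d` and `s ∈ S`, then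
`S ∪ {s ⊕ α₁}` is a metric generator of `Q_d`, where `s ⊕ α₁` flips the first
coordinate of `s`. -/
theorem stmt6 (d : ℕ) (hd : 1 ≤ d) (S : Set (Fin d → Bool))
    (hS : IsEdgeMetricGen (cube d) S) (s : Fin d → Bool) (hs : s ∈ S) :
    IsMetricGen (cube d)
      (S ∪ {fun i : Fin d => if (i : ℕ) = 0 then !(s i) else s i}) := by
  set i : Fin d := ⟨0, hd⟩
  have hflip : (fun j : Fin d => if (j : ℕ) = 0 then !(s j) else s j) = update s i (!s i) := by
    ext j
    split_ifs with hj
    · rw [show j = i from Fin.ext hj, update_self]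
    · rw [update_of_ne (mt (congrArg Fin.val) hj)]
  intro u v huv
  by_contra! hres
  simp only [hflip, cube.dist_eq_hammingDist] at hres
  have hi : u i = v i :=
    apply_eq_of_hammingDist_eq_of_update_not (hres s (.inl hs)) (hres _ (.inr rfl))
  have hne : s(u, update u i (!u i)) ≠ s(v, update v i (!v i)) := by
    rw [ne_eq, Sym2.eq_iff]
    rintro (⟨rfl, -⟩ | ⟨hu, -⟩)
    · exact huv rfl
    · simpa [hi] using congrFun hu i
  obtain ⟨x, hx, hdist⟩ := hS _ (cube.adj_update (Bool.not_ne_self _).symm) _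
    (cube.adj_update (Bool.not_ne_self _).symm) hne
  have hu := cube.edgeDist_update_not_add u x i
  have hv := cube.edgeDist_update_not_add v x i
  have hbit : (if u i ≠ x i then 1 else 0) = (if v i ≠ x i then 1 else 0) := by rw [hi]
  have hux := hres x (.inl hx)
  rw [hammingDist_comm x u, hammingDist_comm x v] at hux
  omega
end

section
/- If S is a metric generator of the hypercube Q_d, then there is at most one index i ∈ {1, …, d} such that all the vertices of S have the same value at the i-th coordinate; i.e., there cannot exist two distinct coordinates on each of which all elements of S agree. -/
/-!
If `S` is constant on two coordinates `i ≠ j`, with values `cᵢ` and `cⱼ`, then swapping the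
coordinates `i` and `j` and flipping both of them when `cᵢ ≠ cⱼ` is an automorphism of `Q_d` that
fixes `S` pointwise but moves some vertex `u`. Automorphisms preserve distances, so no vertex of
`S` distinguishes `u` from its image.
-/

namespace SimpleGraph

variable {V W : Type*} {G : SimpleGraph V} {H : SimpleGraph W}

theorem Hom.edist_map_le (f : G →g H) (u v : V) : H.edist (f u) (f v) ≤ G.edist u v := by
  by_cases hr : G.Reachable u v
  · obtain ⟨p, hp⟩ := hr.exists_walk_length_eq_edist
    rw [← hp, ← p.length_map f]
    exact edist_le _
  · exact edist_eq_top_of_not_reachable hr ▸ le_top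

theorem Iso.dist_map (f : G ≃g H) (u v : V) : H.dist (f u) (f v) = G.dist u v := by
  have hle : H.edist (f u) (f v) ≤ G.edist u v := f.toHom.edist_map_le u v
  have hge : G.edist u v ≤ H.edist (f u) (f v) := by
    simpa using f.symm.toHom.edist_map_le (f u) (f v)
  rw [dist, dist, le_antisymm hle hge]

end SimpleGraph

theorem IsMetricGen.apply_eq_self {V : Type*} {G : SimpleGraph V} {S : Set V}
    (hS : IsMetricGen G S) (φ : G ≃g G) (hφ : ∀ s ∈ S, φ s = s) (u : V) : φ u = u := by
  by_contra hu
  obtain ⟨s, hs, hne⟩ := hS (φ u) u hu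
  exact hne (by rw [← φ.dist_map s u, hφ s hs])

theorem hammingDist_comp_perm {ι β : Type*} [Fintype ι] [DecidableEq β] (σ : Equiv.Perm ι)
    (x y : ι → β) : hammingDist (x ∘ σ) (y ∘ σ) = hammingDist x y :=
  Finset.card_bij' (fun k _ => σ k) (fun k _ => σ.symm k) (by simp) (by simp) (by simp) (by simp)

namespace cube

variable {d : ℕ}

def coordPerm (σ : Equiv.Perm (Fin d)) : cube d ≃g cube d where
  toFun x := x ∘ σ
  invFun x := x ∘ σ.symm
  left_inv x := by ext; simp
  right_inv x := by ext; simp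
  map_rel_iff' := by
    intro x y
    change hammingDist (x ∘ σ) (y ∘ σ) = 1 ↔ hammingDist x y = 1
    rw [hammingDist_comp_perm]

def flip (c : Fin d → Bool) : cube d ≃g cube d where
  toEquiv := Function.Involutive.toPerm (fun x k => xor (x k) (c k)) (fun x => by ext; simp)
  map_rel_iff' := by
    intro x y
    change hammingDist (fun k => xor (x k) (c k)) (fun k => xor (y k) (c k)) = 1 ↔
      hammingDist x y = 1
    rw [hammingDist_comp (fun k b => xor b (c k)) (fun _ _ _ => Bool.xor_left_inj.mp)]

def swapFlip (i j : Fin d) (e : Bool) : cube d ≃g cube d :=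
  (coordPerm (Equiv.swap i j)).trans (flip fun k => decide (k = i ∨ k = j) && e)

theorem swapFlip_apply (i j : Fin d) (e : Bool) (x : Fin d → Bool) (k : Fin d) :
    swapFlip i j e x k = xor (x (Equiv.swap i j k)) (decide (k = i ∨ k = j) && e) :=
  rfl

theorem swapFlip_apply_eq_self_iff {i j : Fin d} (hij : i ≠ j) (e : Bool) (x : Fin d → Bool) :
    swapFlip i j e x = x ↔ xor (x i) (x j) = e := by
  constructor
  · intro h
    have hi : xor (x j) e = x i := by simpa [swapFlip_apply] using congrFun h i
    rw [← hi, Bool.xor_right_comm, Bool.xor_self, Bool.false_xor]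
  · rintro rfl
    ext k
    rcases eq_or_ne k i with rfl | hki
    · simp [swapFlip_apply, Bool.xor_comm]
    rcases eq_or_ne k j with rfl | hkj
    · simp [swapFlip_apply]
    · simp [swapFlip_apply, Equiv.swap_apply_of_ne_of_ne hki hkj, hki, hkj]

end cube

/-- If `S` is a metric generator of `Q_d`, then there do not
exist two distinct coordinates on each of which all elements of `S` agree. -/
theorem stmt11 (d : ℕ) (S : Set (Fin d → Bool)) (hS : IsMetricGen (cube d) S) :
    ¬ ∃ i j : Fin d, i ≠ j ∧ (∃ ci : Bool, ∀ a ∈ S, a i = ci) ∧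
      (∃ cj : Bool, ∀ a ∈ S, a j = cj) := by
  rintro ⟨i, j, hij, ⟨ci, hi⟩, cj, hj⟩
  have hfix : ∀ s ∈ S, cube.swapFlip i j (xor ci cj) s = s := fun s hs =>
    (cube.swapFlip_apply_eq_self_iff hij _ s).2 (by rw [hi s hs, hj s hs])
  let u : Fin d → Bool := fun k => if k = i then !(xor ci cj) else false
  have hu : cube.swapFlip i j (xor ci cj) u ≠ u :=
    (cube.swapFlip_apply_eq_self_iff hij _ u).not.2 (by simp [u, hij.symm])
  exact hu (hS.apply_eq_self _ hfix u)
end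

section
/- The set {(1,1,1), (0,1,0), (0,0,1)} is a mixed metric generator of the hypercube Q_3; consequently mdim(Q_3) ≤ 3. -/
/-!
Graph distance in `Q_d` is Hamming distance: along an edge it changes by at most one, and
flipping a coordinate where `u` and `v` differ brings `u` one step closer to `v`. Hence all
vertex and edge distances to the three generators are explicit, and the twenty elements of
`Q_3` (eight vertices, twelve edges) turn out to have pairwise distinct distance vectors.
-/

section HammingUpdate

variable {ι : Type*} [Fintype ι] [DecidableEq ι] {β : ι → Type*} [∀ i, DecidableEq (β i)]

theorem hammingDist_update_self_of_ne {u : ∀ i, β i} {i : ι} {b : β i} (h : u i ≠ b) :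
    hammingDist u (Function.update u i b) = 1 := by
  rw [hammingDist, Finset.card_eq_one]
  refine ⟨i, Finset.ext fun j => ?_⟩
  by_cases hj : j = i
  · subst hj; simpa using h
  · simp [hj]

theorem hammingDist_update_of_ne {u v : ∀ i, β i} {i : ι} (h : u i ≠ v i) :
    hammingDist (Function.update u i (v i)) v + 1 = hammingDist u v := by
  have hfilter : Finset.univ.filter (fun j => Function.update u i (v i) j ≠ v j)
      = (Finset.univ.filter fun j => u j ≠ v j).erase i := by
    ext j
    by_cases hj : j = i <;> simp [hj]
  rw [hammingDist, hammingDist, hfilter, Finset.card_erase_add_one (by simpa using h)]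

end HammingUpdate

section CubeDistance

variable {d : ℕ}

instance : DecidableRel (cube d).Adj :=
  fun u v => inferInstanceAs (Decidable (hammingDist u v = 1))

theorem hammingDist_le_length_of_walk {u v : Fin d → Bool} (p : (cube d).Walk u v) :
    hammingDist u v ≤ p.length := by
  induction p with
  | nil => simp
  | @cons u w v hadj p ih =>
    calc hammingDist u v ≤ hammingDist u w + hammingDist w v := hammingDist_triangle u w v
      _ ≤ 1 + p.length := by rw [show hammingDist u w = 1 from hadj]; omega
      _ = (p.cons hadj).length := by rw [SimpleGraph.Walk.length_cons]; omega

theorem exists_walk_length_eq_hammingDist (u v : Fin d → Bool) :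
    ∃ p : (cube d).Walk u v, p.length = hammingDist u v := by
  induction hn : hammingDist u v generalizing u with
  | zero =>
    obtain rfl := hammingDist_eq_zero.mp hn
    exact ⟨.nil, rfl⟩
  | succ n ih =>
    obtain ⟨i, hi⟩ := Function.ne_iff.mp (hammingDist_ne_zero.mp (by omega) : u ≠ v)
    have hadj : (cube d).Adj u (Function.update u i (v i)) := hammingDist_update_self_of_ne hi
    have hcloser := hammingDist_update_of_ne hi
    obtain ⟨p, hp⟩ := ih (Function.update u i (v i)) (by omega)
    exact ⟨p.cons hadj, by rw [SimpleGraph.Walk.length_cons, hp]⟩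

theorem cube_dist (u v : Fin d → Bool) : (cube d).dist u v = hammingDist u v := by
  obtain ⟨p, hp⟩ := exists_walk_length_eq_hammingDist u v
  obtain ⟨q, hq⟩ := SimpleGraph.Reachable.exists_walk_length_eq_dist ⟨p⟩
  exact le_antisymm (hp ▸ SimpleGraph.dist_le p) (hq ▸ hammingDist_le_length_of_walk q)

theorem cube_edgeDist (e : Sym2 (Fin d → Bool)) (s : Fin d → Bool) :
    edgeDist (cube d) e s =
      Sym2.lift ⟨fun x y => min (hammingDist x s) (hammingDist y s),
        fun _ _ => min_comm _ _⟩ e := by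
  induction e using Sym2.inductionOn
  simp [edgeDist, cube_dist]

end CubeDistance

theorem mixedMetricDim_le_card {V : Type*} [Fintype V] {G : SimpleGraph V} (S : Finset V)
    (hS : IsMixedMetricGen G ↑S) : mixedMetricDim G ≤ S.card :=
  Nat.sInf_le ⟨S, rfl, hS⟩

theorem isMixedMetricGen_cube_three :
    IsMixedMetricGen (cube 3)
      ({![true, true, true], ![false, true, false], ![false, false, true]} :
        Set (Fin 3 → Bool)) := by
  simp only [IsMixedMetricGen, mixedDist, IsMixedElem, cube_edgeDist, cube_dist,
    Set.mem_insert_iff, Set.mem_singleton_iff, Sum.forall, Sum.elim_inl, Sum.elim_inr, forall_and]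
  refine ⟨⟨?_, ?_⟩, ?_, ?_⟩ <;> decide

/-- `{(1,1,1), (0,1,0), (0,0,1)}` is a mixed metric generator of
`Q_3`; consequently `mdim(Q_3) ≤ 3`. -/
theorem stmt13 :
    IsMixedMetricGen (cube 3)
      ({![true, true, true], ![false, true, false], ![false, false, true]} :
        Set (Fin 3 → Bool)) ∧
    mixedMetricDim (cube 3) ≤ 3 := by
  refine ⟨isMixedMetricGen_cube_three, ?_⟩
  calc mixedMetricDim (cube 3)
      ≤ ({![true, true, true], ![false, true, false], ![false, false, true]} :
          Finset (Fin 3 → Bool)).card :=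
        mixedMetricDim_le_card _ (by simpa using isMixedMetricGen_cube_three)
    _ = 3 := by decide
end

section
/- Let S be a metric generator of the hypercube Q_d, let u be a vertex of Q_d and let e = xy be an edge of Q_d with u ∉ {x, y}. Then there exists s ∈ S with d(s,u) ≠ d(e,s); that is, any metric generator of Q_d distinguishes every vertex from every edge not incident to it. -/
/-! The hypercube is connected and bipartite (colour a vertex by the parity of its weight), so the
parity of `d(s, v)` depends only on the colours of `s` and `v`. The vertex `u` has the colour of one
endpoint of the edge, say `x`, and not that of `y`. A vertex `s ∈ S` resolving `u` and `x` has
`d(s, u) ≠ d(s, x)`, and `d(s, u) ≠ d(s, y)` by parity, hence `d(s, u) ≠ min d(s, x) d(s, y)`. -/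

section

variable {V : Type*} {G : SimpleGraph V}

lemma edgeDist_mk (x y s : V) : edgeDist G s(x, y) s = min (G.dist x s) (G.dist y s) := rfl

namespace SimpleGraph

lemma Connected.even_dist_iff (hG : G.Connected) (c : G.Coloring Bool) (u v : V) :
    Even (G.dist u v) ↔ (c u ↔ c v) := by
  obtain ⟨p, hp⟩ := hG.exists_walk_length_eq_dist u v
  rw [← hp]
  exact c.even_length_iff_congr p

lemma Connected.dist_ne_of_color_ne (hG : G.Connected) (c : G.Coloring Bool) {u v : V}
    (h : c u ≠ c v) (s : V) : G.dist s u ≠ G.dist s v := by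
  intro heq
  have hu := hG.even_dist_iff c s u
  have hv := hG.even_dist_iff c s v
  rw [heq, hv] at hu
  cases hcs : c s <;> cases hcu : c u <;> cases hcv : c v <;> simp_all

end SimpleGraph

lemma IsMetricGen.exists_dist_ne_edgeDist_of_color_eq {S : Set V} (hS : IsMetricGen G S)
    (hG : G.Connected) (c : G.Coloring Bool) {u x y : V} (hxy : G.Adj x y) (hux : u ≠ x)
    (hc : c u = c x) : ∃ s ∈ S, G.dist s u ≠ edgeDist G s(x, y) s := by
  obtain ⟨s, hsS, hsx⟩ := hS u x hux
  have hsy : G.dist s u ≠ G.dist s y :=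
    hG.dist_ne_of_color_ne c (hc ▸ c.valid hxy) s
  refine ⟨s, hsS, ?_⟩
  rw [edgeDist_mk, G.dist_comm (u := x), G.dist_comm (u := y)]
  rcases min_choice (G.dist s x) (G.dist s y) with h | h <;> rwa [h]

theorem IsMetricGen.exists_dist_ne_edgeDist {S : Set V} (hS : IsMetricGen G S)
    (hG : G.Connected) (c : G.Coloring Bool) {u x y : V} (hxy : G.Adj x y) (hux : u ≠ x)
    (huy : u ≠ y) : ∃ s ∈ S, G.dist s u ≠ edgeDist G s(x, y) s := by
  by_cases hc : c u = c x
  · exact hS.exists_dist_ne_edgeDist_of_color_eq hG c hxy hux hc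
  · have hc' : c u = c y := by
      have := c.valid hxy
      cases hcu : c u <;> cases hcx : c x <;> cases hcy : c y <;> simp_all
    rw [Sym2.eq_swap]
    exact hS.exists_dist_ne_edgeDist_of_color_eq hG c hxy.symm huy hc'

end

lemma hammingDist_cast_zmod_two_add {ι : Type*} [Fintype ι] (u v w : ι → Bool) :
    (hammingDist u v : ZMod 2) = hammingDist u w + hammingDist w v := by
  simp only [hammingDist, Finset.natCast_card_filter, ← Finset.sum_add_distrib]
  refine Finset.sum_congr rfl fun i _ => ?_
  cases u i <;> cases v i <;> cases w i <;> decide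

lemma cube_adj_update {d : ℕ} {w : Fin d → Bool} {i : Fin d} {b : Bool} (h : w i ≠ b) :
    (cube d).Adj w (Function.update w i b) := by
  show hammingDist _ _ = 1
  rw [hammingDist, Finset.card_eq_one]
  refine ⟨i, Finset.ext fun j => ?_⟩
  by_cases hji : j = i
  · subst hji; simp [h]
  · simp [hji]

lemma cube_connected (d : ℕ) : (cube d).Connected := by
  classical
  refine SimpleGraph.connected_iff_exists_forall_reachable _ |>.2 ⟨fun _ => false, fun v => ?_⟩
  suffices h : ∀ T : Finset (Fin d),
      (cube d).Reachable (fun _ => false) (T.piecewise v fun _ => false) by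
    simpa using h Finset.univ
  intro T
  induction T using Finset.induction_on with
  | empty => simp
  | insert i T _ ih =>
    rw [Finset.piecewise_insert]
    by_cases hi : T.piecewise v (fun _ => false) i = v i
    · rwa [← hi, Function.update_eq_self]
    · exact ih.trans (cube_adj_update hi).reachable

def cubeParityColoring (d : ℕ) : (cube d).Coloring Bool :=
  SimpleGraph.Coloring.mk (fun v => decide ((hammingDist v fun _ => false : ZMod 2) = 0))
    fun {u v} huv => by
      have h := hammingDist_cast_zmod_two_add u (fun _ => false) v
      rw [show hammingDist u v = 1 from huv, Nat.cast_one] at h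
      generalize (hammingDist u fun _ => false : ZMod 2) = a at h ⊢
      generalize (hammingDist v fun _ => false : ZMod 2) = b at h ⊢
      subst h
      revert b; decide

/-- A metric generator of `Q_d` distinguishes every vertex `u`
from every edge `e = xy` not incident to `u`. -/
theorem stmt15 (d : ℕ) (S : Set (Fin d → Bool)) (hS : IsMetricGen (cube d) S)
    (u x y : Fin d → Bool) (hxy : (cube d).Adj x y) (hux : u ≠ x) (huy : u ≠ y) :
    ∃ s ∈ S, (cube d).dist s u ≠ edgeDist (cube d) s(x, y) s :=
  hS.exists_dist_ne_edgeDist (cube_connected d) (cubeParityColoring d) hxy hux huy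
end
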